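/- arXiv:2509.24721 — 3 statements merged into one kernel-verified Lean document; each statement's English description precedes it below -/
import Mathlib

section
/- Let n be a positive integer, A and B finite abelian groups, and W : A × B → ℤ/nℤ a biadditive pairing that is nondegenerate, i.e. its left kernel {a ∈ A : W(a,b) = 0 for all b ∈ B} and its right kernel {b ∈ B : W(a,b) = 0 for all a ∈ A} are both trivial. Then for every subgroup K ⊆ A one has |K| · |K^⊥| = |B|. -/
/-- The orthogonal `K^⊥ = {b ∈ B | W(k,b) = 0 for all k ∈ K}` of a subgroup
`K ⊆ A` with respect to a biadditive pairing `W : A × B → ℤ/nℤ`. -/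
def orthSubgroup {A B : Type*} [AddCommGroup A] [AddCommGroup B] {n : ℕ}
    (W : A →+ B →+ ZMod n) (K : AddSubgroup A) : AddSubgroup B where
  carrier := {b | ∀ a ∈ K, W a b = 0}
  zero_mem' := by intro a _; simp
  add_mem' := by
    intro b c hb hc a ha
    rw [map_add, hb a ha, hc a ha, add_zero]
  neg_mem' := by
    intro b hb a ha
    rw [map_neg, hb a ha, neg_zero]

/-!
`W` induces pairings `K × B/K^⊥ → ℤ/nℤ` and `B/K^⊥ × K → ℤ/nℤ` with trivial left kernels: the
first by nondegeneracy of `W` on the left, the second by the definition of `K^⊥`. A pairing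
`X × Y → ℤ/nℤ` with trivial left kernel embeds `X` into `Hom(Y, ℤ/nℤ)`, which is no larger than
`Y` since it embeds into the complex characters of `Y`. Hence `|K| = |B/K^⊥|`, and
Lagrange's theorem for `K^⊥ ≤ B` finishes.
-/

lemma card_addMonoidHom_zmod_le (n : ℕ) [NeZero n] (G : Type*) [AddCommGroup G] [Finite G] :
    Nat.card (G →+ ZMod n) ≤ Nat.card G := by
  have : Fintype G := Fintype.ofFinite G
  have hinj : Function.Injective fun c : G →+ ZMod n => ZMod.stdAddChar.compAddMonoidHom c :=
    fun c c' h => AddMonoidHom.ext fun g => ZMod.injective_stdAddChar (DFunLike.congr_fun h g)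
  calc Nat.card (G →+ ZMod n) ≤ Nat.card (AddChar G ℂ) := Nat.card_le_card_of_injective _ hinj
    _ = Nat.card G := by simp only [Nat.card_eq_fintype_card, AddChar.card_eq]

lemma card_le_card_of_leftKernel_trivial {n : ℕ} [NeZero n] {X Y : Type*} [AddCommGroup X]
    [AddCommGroup Y] [Finite Y] (V : X →+ Y →+ ZMod n) (hV : ∀ x, (∀ y, V x y = 0) → x = 0) :
    Nat.card X ≤ Nat.card Y := by
  have : Finite (Y →+ ZMod n) := Finite.of_injective _ DFunLike.coe_injective
  have hinj : Function.Injective V :=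
    (injective_iff_map_eq_zero V).2 fun x hx => hV x (DFunLike.congr_fun hx)
  exact (Nat.card_le_card_of_injective V hinj).trans (card_addMonoidHom_zmod_le n Y)

section OrthQuotient

variable {A B : Type*} [AddCommGroup A] [AddCommGroup B] {n : ℕ}

def orthQuotientPairing (W : A →+ B →+ ZMod n) (K : AddSubgroup A) :
    B ⧸ orthSubgroup W K →+ K →+ ZMod n :=
  QuotientAddGroup.lift _ (W.comp K.subtype).flip fun _ hb => AddMonoidHom.ext fun k => hb k k.2

lemma orthQuotientPairing_leftKernel_trivial (W : A →+ B →+ ZMod n) (K : AddSubgroup A)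
    (x : B ⧸ orthSubgroup W K) (hx : ∀ k, orthQuotientPairing W K x k = 0) : x = 0 := by
  induction x using QuotientAddGroup.induction_on with
  | H b => exact (QuotientAddGroup.eq_zero_iff b).2 fun a ha => hx ⟨a, ha⟩

lemma orthQuotientPairing_flip_leftKernel_trivial (W : A →+ B →+ ZMod n)
    (hleft : ∀ a : A, (∀ b : B, W a b = 0) → a = 0) (K : AddSubgroup A) (k : K)
    (hk : ∀ x, (orthQuotientPairing W K).flip k x = 0) : k = 0 :=
  Subtype.ext <| hleft k fun b => hk b

end OrthQuotient

theorem card_mul_card_orth_general (n : ℕ) (hn : 0 < n)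
    (A B : Type*) [AddCommGroup A] [AddCommGroup B] [Fintype A] [Fintype B]
    (W : A →+ B →+ ZMod n)
    (hleft : ∀ a : A, (∀ b : B, W a b = 0) → a = 0)
    (K : AddSubgroup A) :
    Nat.card K * Nat.card (orthSubgroup W K) = Nat.card B := by
  have : NeZero n := ⟨hn.ne'⟩
  have hcard : Nat.card K = Nat.card (B ⧸ orthSubgroup W K) := le_antisymm
    (card_le_card_of_leftKernel_trivial _ (orthQuotientPairing_flip_leftKernel_trivial W hleft K))
    (card_le_card_of_leftKernel_trivial _ (orthQuotientPairing_leftKernel_trivial W K))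
  rw [hcard, ← AddSubgroup.card_eq_card_quotient_mul_card_addSubgroup]

/-- For a nondegenerate biadditive pairing `W : A × B → ℤ/nℤ` of finite abelian
groups and every subgroup `K ⊆ A`, one has `|K| · |K^⊥| = |B|`. -/
theorem card_mul_card_orth (n : ℕ) (hn : 0 < n)
    (A B : Type*) [AddCommGroup A] [AddCommGroup B] [Fintype A] [Fintype B]
    (W : A →+ B →+ ZMod n)
    (hleft : ∀ a : A, (∀ b : B, W a b = 0) → a = 0)
    (hright : ∀ b : B, (∀ a : A, W a b = 0) → b = 0)
    (K : AddSubgroup A) :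
    Nat.card K * Nat.card (orthSubgroup W K) = Nat.card B :=
  card_mul_card_orth_general n hn A B W hleft K
end

section
/- For all positive integers d and δ one has Σ_{ω ∣ gcd(d,δ)} J₂(ω) · σ(d/ω) = Σ_{l ∣ d} (d/l) · gcd(l,δ)², where both sums range over positive divisors, σ(m) = Σ_{k ∣ m} k is the sum-of-divisors function, and J₂(m) denotes the number of elements of additive order exactly m in (ℤ/mℤ)². -/
/-- The second Jordan totient `J₂(m)`: the number of elements of additive order
exactly `m` in `(ℤ/mℤ)²`. -/
noncomputable def J2 (m : ℕ) : ℕ := Nat.card {x : ZMod m × ZMod m // addOrderOf x = m}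

/-- The `m`-th power sum-of-divisors function `σ_m(k) = Σ_{j ∣ k} j^m`. -/
def sigmaFn (m k : ℕ) : ℕ := ∑ j ∈ k.divisors, j ^ m

/-!
Every element of `(ℤ/nℤ)²` has order dividing `n`, and for `m * q = n` the elements of order
exactly `m` are the images of those of `(ℤ/mℤ)²` under the embedding `1 ↦ q`; hence
`Σ_{m ∣ n} J₂(m) = n²`. With `F` the restriction of `J₂` to the divisors of `δ`, this makes the
right-hand side the Dirichlet product `(id * (F * ζ))(d)`, and regrouping it as
`F * (ζ * id) = F * σ` gives the left-hand side.
-/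

open Finset

namespace ZMod

variable (m q : ℕ)

def scaleHom : ZMod m →+ ZMod (m * q) :=
  lift m ⟨zmultiplesHom _ (q : ZMod (m * q)), by
    rw [zmultiplesHom_apply, natCast_zsmul, nsmul_eq_mul, ← Nat.cast_mul, natCast_self]⟩

variable {m q}

@[simp]
theorem scaleHom_intCast (k : ℤ) : scaleHom m q k = ((k * q : ℤ) : ZMod (m * q)) := by
  simp [scaleHom]

theorem scaleHom_injective (hq : q ≠ 0) : Function.Injective (scaleHom m q) := by
  rw [scaleHom, lift_injective]
  intro k hk
  rw [zmultiplesHom_apply, zsmul_eq_mul, ← Int.cast_natCast, ← Int.cast_mul,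
    intCast_zmod_eq_zero_iff_dvd, Nat.cast_mul] at hk
  rw [intCast_zmod_eq_zero_iff_dvd]
  exact (mul_dvd_mul_iff_right (by exact_mod_cast hq)).mp hk

theorem nsmul_eq_zero_iff_mem_range_scaleHom (hm : m ≠ 0) {a : ZMod (m * q)} :
    m • a = 0 ↔ a ∈ Set.range (scaleHom m q) := by
  constructor
  · obtain ⟨k, rfl⟩ := intCast_surjective a
    intro h
    rw [nsmul_eq_mul, ← Int.cast_natCast, ← Int.cast_mul, intCast_zmod_eq_zero_iff_dvd,
      Nat.cast_mul] at h
    obtain ⟨j, rfl⟩ := (mul_dvd_mul_iff_left (by exact_mod_cast hm)).mp h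
    exact ⟨j, by rw [scaleHom_intCast, mul_comm j]⟩
  · rintro ⟨y, rfl⟩
    rw [← map_nsmul, nsmul_eq_mul, natCast_self, zero_mul, map_zero]

end ZMod

theorem Nat.card_addOrderOf_eq_of_injective {G H : Type*} [AddMonoid G] [AddMonoid H]
    {f : G →+ H} (hf : Function.Injective f) {m : ℕ}
    (hm : ∀ y : H, m • y = 0 → y ∈ Set.range f) :
    Nat.card {x : G // addOrderOf x = m} = Nat.card {y : H // addOrderOf y = m} := by
  refine Nat.card_congr (Equiv.ofBijective
    (fun x => ⟨f x, (addOrderOf_injective f hf x).trans x.2⟩) ⟨?_, ?_⟩)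
  · exact fun x x' h => Subtype.ext (hf (congrArg Subtype.val h))
  · rintro ⟨y, hy⟩
    obtain ⟨x, rfl⟩ := hm y (hy ▸ addOrderOf_nsmul_eq_zero y)
    exact ⟨⟨x, (addOrderOf_injective f hf x).symm.trans hy⟩, rfl⟩

theorem card_addOrderOf_zmod_prod_eq_J2 {m n : ℕ} (hn : n ≠ 0) (h : m ∣ n) :
    Nat.card {x : ZMod n × ZMod n // addOrderOf x = m} = J2 m := by
  obtain ⟨q, rfl⟩ := h
  have hm : m ≠ 0 := left_ne_zero_of_mul hn
  have hq : q ≠ 0 := right_ne_zero_of_mul hn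
  refine (Nat.card_addOrderOf_eq_of_injective
    (f := (ZMod.scaleHom m q).prodMap (ZMod.scaleHom m q))
    (Prod.map_injective.mpr ⟨ZMod.scaleHom_injective hq, ZMod.scaleHom_injective hq⟩)
    fun y hy => ?_).symm
  obtain ⟨a, ha⟩ := (ZMod.nsmul_eq_zero_iff_mem_range_scaleHom hm).mp congr(($hy).1)
  obtain ⟨b, hb⟩ := (ZMod.nsmul_eq_zero_iff_mem_range_scaleHom hm).mp congr(($hy).2)
  exact ⟨(a, b), Prod.ext ha hb⟩

theorem sum_divisors_J2 {n : ℕ} (hn : n ≠ 0) : ∑ m ∈ n.divisors, J2 m = n ^ 2 := by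
  have : NeZero n := ⟨hn⟩
  have hall : ∀ x : ZMod n × ZMod n, n • x = 0 := fun x => by
    simp [Prod.ext_iff, nsmul_eq_mul]
  calc ∑ m ∈ n.divisors, J2 m
      = ∑ m ∈ n.divisors, #{x : ZMod n × ZMod n | addOrderOf x = m} :=
        sum_congr rfl fun m hm => by
          rw [← card_addOrderOf_zmod_prod_eq_J2 hn (Nat.dvd_of_mem_divisors hm),
            Nat.card_eq_fintype_card, Fintype.card_subtype]
    _ = #{x : ZMod n × ZMod n | n • x = 0} := sum_card_addOrderOf_eq_card_nsmul_eq_zero hn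
    _ = n ^ 2 := by simp [hall, sq]

namespace ArithmeticFunction

open scoped ArithmeticFunction.zeta ArithmeticFunction.sigma

variable {R : Type*}

def restrictDvd [Zero R] (f : ℕ → R) (δ : ℕ) : ArithmeticFunction R :=
  ⟨fun ω => if ω ∣ δ ∧ ω ≠ 0 then f ω else 0, by simp⟩

theorem restrictDvd_mul_apply [Semiring R] (f : ℕ → R) (δ : ℕ) (g : ArithmeticFunction R)
    (n : ℕ) : (restrictDvd f δ * g) n = ∑ ω ∈ (n.gcd δ).divisors, f ω * g (n / ω) := by
  rcases eq_or_ne n 0 with rfl | hn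
  · simp
  rw [mul_apply, Nat.sum_divisorsAntidiagonal (fun x y => restrictDvd f δ x * g y),
    ← Nat.divisors_filter_dvd_of_dvd hn (Nat.gcd_dvd_left n δ), sum_filter]
  refine sum_congr rfl fun ω hω => ?_
  have hωn : ω ∣ n := Nat.dvd_of_mem_divisors hω
  simp [restrictDvd, Nat.dvd_gcd_iff, hωn, ne_zero_of_dvd_ne_zero hn hωn]

theorem restrictDvd_mul_zeta_apply (f : ℕ → ℕ) (δ : ℕ) {n : ℕ} (hn : n ≠ 0) :
    (restrictDvd f δ * ζ) n = ∑ ω ∈ (n.gcd δ).divisors, f ω := by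
  rw [restrictDvd_mul_apply]
  refine sum_congr rfl fun ω hω => ?_
  have hωn : ω ∣ n := (Nat.dvd_of_mem_divisors hω).trans (Nat.gcd_dvd_left n δ)
  have hquot : n / ω ≠ 0 :=
    (Nat.div_ne_zero_iff_of_dvd hωn).mpr ⟨hn, ne_zero_of_dvd_ne_zero hn hωn⟩
  rw [zeta_apply_ne hquot, mul_one]

theorem sum_divisors_gcd_mul_sigma_one (f : ℕ → ℕ) (d δ : ℕ) :
    ∑ ω ∈ (d.gcd δ).divisors, f ω * σ 1 (d / ω)
      = ∑ l ∈ d.divisors, d / l * ∑ ω ∈ (l.gcd δ).divisors, f ω := by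
  calc ∑ ω ∈ (d.gcd δ).divisors, f ω * σ 1 (d / ω)
      = (restrictDvd f δ * (ζ * .id)) d := by
        rw [← pow_one_eq_id, zeta_mul_pow_eq_sigma, restrictDvd_mul_apply]
    _ = (.id * (restrictDvd f δ * ζ)) d := by rw [mul_comm ζ, mul_left_comm]
    _ = ∑ l ∈ d.divisors, d / l * ∑ ω ∈ (l.gcd δ).divisors, f ω := by
        rw [mul_apply,
          Nat.sum_divisorsAntidiagonal' fun x y => ArithmeticFunction.id x * (restrictDvd f δ * ζ) y]
        refine sum_congr rfl fun l hl => ?_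
        rw [id_apply, restrictDvd_mul_zeta_apply _ _ ((Nat.pos_of_mem_divisors hl).ne')]

end ArithmeticFunction

theorem sum_J2_sigma_eq_sum_gcd_sq_general (d δ : ℕ) :
    ∑ ω ∈ (Nat.gcd d δ).divisors, J2 ω * sigmaFn 1 (d / ω)
      = ∑ l ∈ d.divisors, (d / l) * Nat.gcd l δ ^ 2 := by
  have hσ (k : ℕ) : sigmaFn 1 k = ArithmeticFunction.sigma 1 k := rfl
  simp_rw [hσ, ArithmeticFunction.sum_divisors_gcd_mul_sigma_one]
  refine sum_congr rfl fun l hl => ?_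
  rw [sum_divisors_J2 (Nat.gcd_ne_zero_left ((Nat.pos_of_mem_divisors hl).ne'))]

/-- `Σ_{ω ∣ gcd(d,δ)} J₂(ω)·σ(d/ω) = Σ_{l ∣ d} (d/l)·gcd(l,δ)²`, where
`σ = σ_1` is the sum-of-divisors function. -/
theorem sum_J2_sigma_eq_sum_gcd_sq (d δ : ℕ) (hd : 0 < d) (hδ : 0 < δ) :
    ∑ ω ∈ (Nat.gcd d δ).divisors, J2 ω * sigmaFn 1 (d / ω)
      = ∑ l ∈ d.divisors, (d / l) * Nat.gcd l δ ^ 2 :=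
  sum_J2_sigma_eq_sum_gcd_sq_general d δ
end

section
/- Let n ≥ 1, let a_1, …, a_n be complex numbers with a_1 + ⋯ + a_n = 0, and let j be a natural number such that j + n is odd. Then Σ_{S ⊆ {1,…,n}} (−1)^{|S|} · a_S^j = 0, where a_S = Σ_{i∈S} a_i. -/
set_option maxRecDepth 4000

/-- For complex numbers `a_1, …, a_n` with `Σ a_i = 0` and `j` such that `j + n`
is odd, `Σ_{S ⊆ {1,…,n}} (−1)^{|S|} a_S^j = 0`, where `a_S = Σ_{i∈S} a_i`. -/
theorem alternating_sum_pow_eq_zero_of_odd (n : ℕ) (hn : 1 ≤ n) (a : Fin n → ℂ)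
    (ha : ∑ i, a i = 0) (j : ℕ) (hodd : Odd (j + n)) :
    ∑ S : Finset (Fin n), (-1 : ℂ) ^ S.card * (∑ i ∈ S, a i) ^ j = 0 := by
  set f : Finset (Fin n) → ℂ := fun S => (-1 : ℂ) ^ S.card * (∑ i ∈ S, a i) ^ j with hf
  have key : ∀ S : Finset (Fin n), f Sᶜ = - f S := by
    intro S
    have hsum : ∑ i ∈ Sᶜ, a i = - ∑ i ∈ S, a i := by
      have := Finset.sum_compl_add_sum S a
      rw [ha] at this
      linear_combination this
    have hcard : Sᶜ.card = n - S.card := by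
      simp [Finset.card_compl]
    have hle : S.card ≤ n := by
      simpa using S.card_le_univ
    have hnj : ((-1 : ℂ)) ^ (j + n) = -1 := Odd.neg_one_pow hodd
    have heven : ((-1 : ℂ)) ^ S.card * (-1 : ℂ) ^ S.card = 1 := by
      rw [← pow_add]
      exact Even.neg_one_pow ⟨S.card, rfl⟩
    have hpow : ((-1 : ℂ)) ^ (n - S.card) * (-1 : ℂ) ^ j = - (-1 : ℂ) ^ S.card := by
      have h1 : ((-1 : ℂ)) ^ (n - S.card) * (-1 : ℂ) ^ j * (-1 : ℂ) ^ S.card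
          = (-1 : ℂ) ^ (j + n) := by
        rw [← pow_add, ← pow_add]
        congr 1
        omega
      rw [hnj] at h1
      linear_combination (-1 : ℂ) ^ S.card * h1
        - ((-1 : ℂ) ^ (n - S.card) * (-1 : ℂ) ^ j) * heven
    show (-1 : ℂ) ^ Sᶜ.card * (∑ i ∈ Sᶜ, a i) ^ j = - ((-1 : ℂ) ^ S.card * (∑ i ∈ S, a i) ^ j)
    rw [hcard, hsum, neg_pow (∑ i ∈ S, a i) j]
    calc (-1 : ℂ) ^ (n - S.card) * ((-1 : ℂ) ^ j * (∑ i ∈ S, a i) ^ j)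
        = ((-1 : ℂ) ^ (n - S.card) * (-1 : ℂ) ^ j) * (∑ i ∈ S, a i) ^ j := by ring
      _ = (- (-1 : ℂ) ^ S.card) * (∑ i ∈ S, a i) ^ j := by rw [hpow]
      _ = - ((-1 : ℂ) ^ S.card * (∑ i ∈ S, a i) ^ j) := by ring
  have hinv : Function.Bijective (fun S : Finset (Fin n) => Sᶜ) :=
    Function.Involutive.bijective (fun S => compl_compl S)
  have h1 : ∑ S : Finset (Fin n), f Sᶜ = ∑ S : Finset (Fin n), f S :=
    Fintype.sum_bijective _ hinv (fun S => f Sᶜ) f (fun S => rfl)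
  have h2 : ∑ S : Finset (Fin n), f S = - ∑ S : Finset (Fin n), f S :=
    h1.symm.trans (by simp [key])
  linear_combination h2 / 2
end
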